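/- arXiv:1911.02569 — 3 statements merged into one kernel-verified Lean document; each statement's English description precedes it below -/
import Mathlib

section
/- Let s, m₁, m₂ be natural numbers with 1 ≤ s ≤ m₁ ≤ m₂. Then ((m₁+m₂−2s)! · m₁! · m₂!) / ((m₁+m₂−s)! · (m₁−s)! · (m₂−s)!) = ∏_{j=0}^{s-1} (m₁−j)(m₂−j)/(m₁+m₂−s−j) ≤ m₁^s · exp(−s(s−1)/(2m₁)). -/
/-!
Each factor of the product satisfies `(m₁ - j)(m₂ - j)/(m₁ + m₂ - s - j) ≤ m₁ - j`, because
`m₂ - j ≤ m₁ + m₂ - s - j` when `s ≤ m₁`; and `m₁ - j = m₁ (1 - j/m₁) ≤ m₁ exp(-j/m₁)`.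
Multiplying over `j < s` and summing `∑_{j<s} j = s(s-1)/2` in the exponent gives the bound.
-/

open Real Finset
open scoped Nat

theorem Nat.cast_descFactorial_eq_prod_range_sub {R : Type*} [CommRing R] {n k : ℕ} (h : k ≤ n) :
    (n.descFactorial k : R) = ∏ j ∈ range k, ((n : R) - j) := by
  rw [Nat.descFactorial_eq_prod_range, Nat.cast_prod]
  exact prod_congr rfl fun j hj => Nat.cast_sub (by grind)

theorem factorial_ratio_eq_descFactorial {s a b : ℕ} (ha : s ≤ a) (hb : s ≤ b) :
    ((a + b - 2 * s)! * a ! * b ! : ℝ) / ((a + b - s)! * (a - s)! * (b - s)!) =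
      a.descFactorial s * b.descFactorial s / (a + b - s).descFactorial s := by
  have hab : a + b - s - s = a + b - 2 * s := by omega
  rw [← Nat.factorial_mul_descFactorial ha, ← Nat.factorial_mul_descFactorial hb,
    ← Nat.factorial_mul_descFactorial (by omega : s ≤ a + b - s), hab]
  push_cast
  have := (a + b - 2 * s).factorial_pos
  have := (a - s).factorial_pos
  have := (b - s).factorial_pos
  field_simp

theorem Real.sub_le_mul_exp_neg_div {m : ℝ} (hm : 0 < m) (x : ℝ) : m - x ≤ m * exp (-x / m) := by
  calc m - x = m * (-x / m + 1) := by field_simp; ring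
    _ ≤ m * exp (-x / m) := by gcongr; exact add_one_le_exp _

theorem Finset.sum_range_cast_id (s : ℕ) : ∑ j ∈ range s, (j : ℝ) = s * (s - 1) / 2 := by
  induction s with
  | zero => simp
  | succ s ih => rw [sum_range_succ, ih]; push_cast; ring

theorem prod_range_sub_le_pow_mul_exp {m s : ℕ} (h : s ≤ m) :
    ∏ j ∈ range s, ((m : ℝ) - j) ≤ (m : ℝ) ^ s * exp (-(s * (s - 1) : ℝ) / (2 * m)) := by
  calc ∏ j ∈ range s, ((m : ℝ) - j)
      ≤ ∏ j ∈ range s, (m : ℝ) * exp (-(j : ℝ) / m) := by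
        refine prod_le_prod (fun j hj => ?_) (fun j hj => ?_)
        · exact sub_nonneg.2 (by exact_mod_cast (mem_range.1 hj).le.trans h)
        · exact sub_le_mul_exp_neg_div (Nat.cast_pos.2 (by grind)) _
    _ = (m : ℝ) ^ s * exp (-(∑ j ∈ range s, (j : ℝ)) / m) := by
        rw [prod_mul_distrib, prod_const, card_range, ← exp_sum, ← sum_div, ← sum_neg_distrib]
    _ = (m : ℝ) ^ s * exp (-(s * (s - 1) : ℝ) / (2 * m)) := by
        rw [sum_range_cast_id]; ring_nf

theorem factorial_ratio_bound_general (s m₁ m₂ : ℕ) (h1 : s ≤ m₁) (h2 : m₁ ≤ m₂) :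
    ((Nat.factorial (m₁ + m₂ - 2 * s) : ℝ) * Nat.factorial m₁ * Nat.factorial m₂) /
        ((Nat.factorial (m₁ + m₂ - s) : ℝ) * Nat.factorial (m₁ - s) * Nat.factorial (m₂ - s)) =
      ∏ j ∈ Finset.range s,
        ((m₁ : ℝ) - j) * ((m₂ : ℝ) - j) / ((m₁ : ℝ) + m₂ - s - j) ∧
    ∏ j ∈ Finset.range s,
        ((m₁ : ℝ) - j) * ((m₂ : ℝ) - j) / ((m₁ : ℝ) + m₂ - s - j) ≤
      (m₁ : ℝ) ^ s * Real.exp (-(s * (s - 1) : ℝ) / (2 * m₁)) := by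
  have h2' : s ≤ m₂ := h1.trans h2
  have hcast : ((m₁ + m₂ - s : ℕ) : ℝ) = m₁ + m₂ - s := by push_cast [h1.trans le_self_add]; rfl
  constructor
  · rw [factorial_ratio_eq_descFactorial h1 h2', prod_div_distrib, prod_mul_distrib,
      Nat.cast_descFactorial_eq_prod_range_sub h1, Nat.cast_descFactorial_eq_prod_range_sub h2',
      Nat.cast_descFactorial_eq_prod_range_sub (by omega : s ≤ m₁ + m₂ - s), hcast]
  · refine le_trans (prod_le_prod (fun j hj => ?_) (fun j hj => ?_)) (prod_range_sub_le_pow_mul_exp h1)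
    all_goals
      have hj : (j : ℝ) + 1 ≤ s := by exact_mod_cast mem_range.1 hj
      have : (s : ℝ) ≤ m₁ := by exact_mod_cast h1
      have : (s : ℝ) ≤ m₂ := by exact_mod_cast h2'
    · apply div_nonneg (mul_nonneg ?_ ?_) ?_ <;> linarith
    · rw [mul_div_assoc]
      exact mul_le_of_le_one_right (by linarith) (div_le_one_of_le₀ (by linarith) (by linarith))

theorem factorial_ratio_bound (s m₁ m₂ : ℕ) (hs : 1 ≤ s) (h1 : s ≤ m₁) (h2 : m₁ ≤ m₂) :
    ((Nat.factorial (m₁ + m₂ - 2 * s) : ℝ) * Nat.factorial m₁ * Nat.factorial m₂) /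
        ((Nat.factorial (m₁ + m₂ - s) : ℝ) * Nat.factorial (m₁ - s) * Nat.factorial (m₂ - s)) =
      ∏ j ∈ Finset.range s,
        ((m₁ : ℝ) - j) * ((m₂ : ℝ) - j) / ((m₁ : ℝ) + m₂ - s - j) ∧
    ∏ j ∈ Finset.range s,
        ((m₁ : ℝ) - j) * ((m₂ : ℝ) - j) / ((m₁ : ℝ) + m₂ - s - j) ≤
      (m₁ : ℝ) ^ s * Real.exp (-(s * (s - 1) : ℝ) / (2 * m₁)) :=
  factorial_ratio_bound_general s m₁ m₂ h1 h2
end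

section
/- Fix A ∈ ℝ and let γ = 256/27, Δ_k = 6(4k+1)!/(k!(3k+3)!), λ_n = (1/2)log n + (5/2)log log n + A, and ω_n = λ_n/√(γn). Let (a_n) be any sequence with a_n → ∞ and a_n = o(√(log n)), and let K_n = [ (1/4)log n − a_n√(log n), (1/4)log n + a_n√(log n) ]. Then lim_{n→∞} Σ_{k ∈ {1,…,n-3}, k ∉ K_n} Δ_k · ((n-3)!/(n-3-k)!) · ℙ(Poisson(ω_n) ≥ 2k+1) = 0. -/
/-!
Write `L = log n` and `P_λ(m) = e^{-λ} λ^m / m!`. Comparing consecutive ratios in Tutte's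
formula gives `Δ_k ≤ γ^k (k+1)^{-5/2}`, the falling factorial is at most `n^k`, and
`ℙ(Poisson(ω) ≥ m) ≤ ω^m / m!`. Since `e^{λ_n} = √n L^{5/2} e^A`, the `k`-th summand is therefore
at most `e^A (L/(k+1))^{5/2} P_{λ_n}(2k+1)`.

Outside the window, `2k+1` is at distance at least `a_n √L` from `λ_n ≈ L/2`, so exponential
tilting by `1 + a_n/(2√L)` (Chernoff's bound) makes the Poisson mass there at most `e^{-a_n²/4}`.
The factor `(L/(k+1))^{5/2}` stays below `8^{5/2}` except when `k ≤ L/8`; there `2k+1 ≤ λ_n/2`,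
and the tilt `5/4` gives the mass `e^{-λ_n/16}`, which beats `L^{5/2}`.
-/

open Filter Real Finset

/-- Tutte's count of planar triangulations with `k` internal vertices. -/
noncomputable def tutteDelta (k : ℕ) : ℝ :=
  6 * (Nat.factorial (4 * k + 1)) / (Nat.factorial k * Nat.factorial (3 * k + 3))

/-- The probability that a Poisson random variable with parameter `t` is at least `m`. -/
noncomputable def poissonTail (t : ℝ) (m : ℕ) : ℝ :=
  ∑' j : ℕ, if m ≤ j then Real.exp (-t) * t ^ j / (Nat.factorial j) else 0

open scoped Nat

lemma tutteDelta_nonneg (k : ℕ) : 0 ≤ tutteDelta k := by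
  unfold tutteDelta; positivity

lemma tutteDelta_succ_mul (k : ℕ) :
    tutteDelta (k + 1) * ((k + 1) * (3 * k + 4) * (3 * k + 5) * (3 * k + 6))
      = tutteDelta k * ((4 * k + 2) * (4 * k + 3) * (4 * k + 4) * (4 * k + 5)) := by
  simp only [tutteDelta, show 4 * (k + 1) + 1 = 4 * k + 1 + 1 + 1 + 1 + 1 by ring,
    show 3 * (k + 1) + 3 = 3 * k + 3 + 1 + 1 + 1 by ring, Nat.factorial_succ]
  push_cast
  field_simp
  ring

lemma tutteDelta_sq_mul_le (k : ℕ) :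
    tutteDelta k ^ 2 * ((k : ℝ) + 1) ^ 5 ≤ ((256 / 27 : ℝ) ^ k) ^ 2 := by
  induction k with
  | zero => norm_num [tutteDelta]
  | succ k ih =>
    set D : ℝ := (k + 1) * (3 * k + 4) * (3 * k + 5) * (3 * k + 6)
    set N : ℝ := (4 * k + 2) * (4 * k + 3) * (4 * k + 4) * (4 * k + 5)
    have hD : 0 < D := by positivity
    have hratio : N ^ 2 * ((k : ℝ) + 2) ^ 5 ≤ (256 / 27) ^ 2 * D ^ 2 * ((k : ℝ) + 1) ^ 5 := by
      have : 0 ≤ (256 / 27) ^ 2 * D ^ 2 * ((k : ℝ) + 1) ^ 5 - N ^ 2 * ((k : ℝ) + 2) ^ 5 := by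
        -- every coefficient of this polynomial in `k` is nonnegative
        simp only [D, N]; ring_nf; positivity
      linarith
    refine le_of_mul_le_mul_right ?_ (pow_pos hD 2)
    calc tutteDelta (k + 1) ^ 2 * (((k + 1 : ℕ) : ℝ) + 1) ^ 5 * D ^ 2
        = (tutteDelta (k + 1) * D) ^ 2 * ((k : ℝ) + 2) ^ 5 := by push_cast; ring
      _ = tutteDelta k ^ 2 * (N ^ 2 * ((k : ℝ) + 2) ^ 5) := by rw [tutteDelta_succ_mul]; ring
      _ ≤ tutteDelta k ^ 2 * ((256 / 27) ^ 2 * D ^ 2 * ((k : ℝ) + 1) ^ 5) := by gcongr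
      _ = tutteDelta k ^ 2 * ((k : ℝ) + 1) ^ 5 * ((256 / 27) ^ 2 * D ^ 2) := by ring
      _ ≤ ((256 / 27) ^ k) ^ 2 * ((256 / 27) ^ 2 * D ^ 2) := by gcongr
      _ = ((256 / 27 : ℝ) ^ (k + 1)) ^ 2 * D ^ 2 := by ring

lemma tutteDelta_le (k : ℕ) :
    tutteDelta k ≤ (256 / 27 : ℝ) ^ k / ((k : ℝ) + 1) ^ (5 / 2 : ℝ) := by
  have hk : (0 : ℝ) < k + 1 := by positivity
  have hΔ := tutteDelta_nonneg k
  rw [le_div_iff₀ (by positivity),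
    ← pow_le_pow_iff_left₀ (by positivity) (by positivity) two_ne_zero, mul_pow, ← rpow_natCast (_ ^ _), ← rpow_mul hk.le]
  norm_num
  exact_mod_cast tutteDelta_sq_mul_le k

lemma factorial_div_factorial_sub_le_pow {m k : ℕ} (hk : k ≤ m) :
    (m ! : ℝ) / (m - k)! ≤ (m : ℝ) ^ k := by
  rw [div_le_iff₀ (by positivity), ← Nat.factorial_mul_descFactorial hk, Nat.cast_mul, mul_comm]
  gcongr
  exact_mod_cast Nat.descFactorial_le_pow m k

lemma hasSum_pow_div_factorial (x : ℝ) : HasSum (fun n : ℕ => x ^ n / n !) (exp x) := by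
  rw [Real.exp_eq_exp_ℝ]
  exact NormedSpace.expSeries_div_hasSum_exp x

lemma poissonTail_nonneg {t : ℝ} (ht : 0 ≤ t) (m : ℕ) : 0 ≤ poissonTail t m :=
  tsum_nonneg fun j => by split_ifs <;> positivity

lemma poissonTail_le {t : ℝ} (ht : 0 ≤ t) (m : ℕ) : poissonTail t m ≤ t ^ m / m ! := by
  have hdom (i : ℕ) :
      exp (-t) * t ^ (i + m) / (i + m)! ≤ exp (-t) * (t ^ m / m !) * (t ^ i / i !) := by
    have hfac : (i ! * m ! : ℝ) ≤ (i + m)! := mod_cast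
      Nat.le_of_dvd (Nat.factorial_pos _) (Nat.factorial_mul_factorial_dvd_factorial_add i m)
    calc exp (-t) * t ^ (i + m) / (i + m)! ≤ exp (-t) * t ^ (i + m) / (i ! * m !) := by gcongr
      _ = exp (-t) * (t ^ m / m !) * (t ^ i / i !) := by rw [pow_add]; field_simp
  have hsum : Summable fun i : ℕ => exp (-t) * (t ^ m / m !) * (t ^ i / i !) :=
    (hasSum_pow_div_factorial t).summable.mul_left _
  have hshift : Summable fun i : ℕ => exp (-t) * t ^ (i + m) / (i + m)! :=
    .of_nonneg_of_le (fun i => by positivity) hdom hsum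
  have htail : poissonTail t m = ∑' i : ℕ, exp (-t) * t ^ (i + m) / (i + m)! := by
    rw [poissonTail, ← ((summable_nat_add_iff m).1 ?_).sum_add_tsum_nat_add m]
    · simp [sum_eq_zero fun i (hi : i ∈ range m) => if_neg (not_le.2 (mem_range.1 hi))]
    · simpa using hshift
  calc poissonTail t m ≤ ∑' i : ℕ, exp (-t) * (t ^ m / m !) * (t ^ i / i !) :=
        htail ▸ hshift.tsum_le_tsum hdom hsum
    _ = t ^ m / m ! := by
        rw [tsum_mul_left, (hasSum_pow_div_factorial t).tsum_eq, mul_right_comm, ← exp_add,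
          neg_add_cancel, exp_zero, one_mul]

lemma inv_one_add_le_one_sub_add_sq {d : ℝ} (hd : 0 ≤ d) : (1 + d)⁻¹ ≤ 1 - d + d ^ 2 := by
  rw [inv_le_iff_one_le_mul₀ (by positivity)]
  nlinarith [pow_nonneg hd 3]

section PoissonChernoff

variable {ι : Type*} (S : Finset ι) {f : ι → ℕ} {x : ℝ}

lemma sum_pow_div_factorial_le_exp (hf : Set.InjOn f S) (hx : 0 ≤ x) :
    ∑ i ∈ S, x ^ f i / (f i)! ≤ exp x := by
  rw [← Finset.sum_image (f := fun m => x ^ m / m !) hf]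
  exact sum_le_hasSum _ (fun m _ => by positivity) (hasSum_pow_div_factorial x)

lemma sum_poisson_le_rpow_mul_exp_of_le (hf : Set.InjOn f S) (hx : 0 ≤ x) {s M : ℝ}
    (hs : 1 ≤ s) (hM : ∀ i ∈ S, (f i : ℝ) ≤ M) :
    ∑ i ∈ S, exp (-x) * x ^ f i / (f i)! ≤ s ^ M * exp (x / s - x) := by
  have hs0 : 0 < s := by linarith
  calc ∑ i ∈ S, exp (-x) * x ^ f i / (f i)!
      = ∑ i ∈ S, exp (-x) * s ^ (f i : ℝ) * ((x / s) ^ f i / (f i)!) := by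
        refine sum_congr rfl fun i _ => ?_
        rw [rpow_natCast, div_pow]
        field_simp
    _ ≤ ∑ i ∈ S, exp (-x) * s ^ M * ((x / s) ^ f i / (f i)!) := by
        gcongr with i hi
        exact hM i hi
    _ ≤ exp (-x) * s ^ M * exp (x / s) := by
        rw [← mul_sum]
        gcongr
        exact sum_pow_div_factorial_le_exp S hf (by positivity)
    _ = s ^ M * exp (x / s - x) := by
        rw [sub_eq_neg_add, exp_add]; ring

lemma sum_poisson_le_rpow_mul_exp_of_ge (hf : Set.InjOn f S) (hx : 0 ≤ x) {s M : ℝ}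
    (hs : 1 ≤ s) (hM : ∀ i ∈ S, M ≤ f i) :
    ∑ i ∈ S, exp (-x) * x ^ f i / (f i)! ≤ s ^ (-M) * exp (s * x - x) := by
  have hs0 : 0 < s := by linarith
  calc ∑ i ∈ S, exp (-x) * x ^ f i / (f i)!
      = ∑ i ∈ S, exp (-x) * s ^ (-(f i : ℝ)) * ((s * x) ^ f i / (f i)!) := by
        refine sum_congr rfl fun i _ => ?_
        rw [rpow_neg hs0.le, rpow_natCast, mul_pow]
        field_simp
    _ ≤ ∑ i ∈ S, exp (-x) * s ^ (-M) * ((s * x) ^ f i / (f i)!) := by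
        gcongr with i hi
        exact hM i hi
    _ ≤ exp (-x) * s ^ (-M) * exp (s * x) := by
        rw [← mul_sum]
        gcongr
        exact sum_pow_div_factorial_le_exp S hf (by positivity)
    _ = s ^ (-M) * exp (s * x - x) := by
        rw [sub_eq_neg_add, exp_add]; ring

lemma sum_poisson_le_exp_of_le (hf : Set.InjOn f S) (hx : 0 ≤ x) {d M : ℝ}
    (hd : 0 ≤ d) (hM0 : 0 ≤ M) (hM : ∀ i ∈ S, (f i : ℝ) ≤ M) :
    ∑ i ∈ S, exp (-x) * x ^ f i / (f i)! ≤ exp (-d * (x - M) + x * d ^ 2) := by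
  refine (sum_poisson_le_rpow_mul_exp_of_le S hf hx (s := 1 + d) (by linarith) hM).trans ?_
  rw [rpow_def_of_pos (by linarith), ← exp_add, exp_le_exp, div_eq_mul_inv]
  have hlog : log (1 + d) ≤ d := by linarith [log_le_sub_one_of_pos (by linarith : 0 < 1 + d)]
  nlinarith [mul_le_mul_of_nonneg_left (inv_one_add_le_one_sub_add_sq hd) hx]

lemma sum_poisson_le_exp_of_ge (hf : Set.InjOn f S) (hx : 0 ≤ x) {d M : ℝ}
    (hd : 0 ≤ d) (hM0 : 0 ≤ M) (hM : ∀ i ∈ S, M ≤ f i) :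
    ∑ i ∈ S, exp (-x) * x ^ f i / (f i)! ≤ exp (-d * (M - x) + M * d ^ 2) := by
  refine (sum_poisson_le_rpow_mul_exp_of_ge S hf hx (s := 1 + d) (by linarith) hM).trans ?_
  rw [rpow_def_of_pos (by linarith), ← exp_add, exp_le_exp]
  have hlog : d - d ^ 2 ≤ log (1 + d) := by
    linarith [one_sub_inv_le_log_of_pos (by linarith : 0 < 1 + d),
      inv_one_add_le_one_sub_add_sq hd]
  nlinarith

end PoissonChernoff

section Window

variable {L lam a : ℝ}

lemma rpow_mul_le_of_notMem_window (hL : 0 < L) (ha : 0 ≤ a) (hlo : L / 2 + 2 ≤ lam)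
    (hhi : lam ≤ L / 2 + a * √L + 1) {k : ℕ}
    (hk : (k : ℝ) ∉ Set.Icc (1 / 4 * L - a * √L) (1 / 4 * L + a * √L)) {p : ℝ} (hp : 0 ≤ p) :
    (L / (k + 1)) ^ (5 / 2 : ℝ) * p ≤
      L ^ (5 / 2 : ℝ) * (if ((2 * k + 1 : ℕ) : ℝ) ≤ lam / 2 then p else 0) +
        8 ^ (5 / 2 : ℝ) * ((if ((2 * k + 1 : ℕ) : ℝ) ≤ lam - a * √L then p else 0) +
          (if lam + a * √L ≤ ((2 * k + 1 : ℕ) : ℝ) then p else 0)) := by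
  have hk0 : (0 : ℝ) ≤ k := k.cast_nonneg
  have hcast : ((2 * k + 1 : ℕ) : ℝ) = 2 * k + 1 := by push_cast; ring
  have hmono : ∀ c : ℝ, L / (k + 1) ≤ c → (L / (k + 1)) ^ (5 / 2 : ℝ) * p ≤ c ^ (5 / 2 : ℝ) * p :=
    fun c hc => by gcongr
  have h8 : L / 8 < k → L / (k + 1) ≤ 8 := fun h => by
    rw [div_le_iff₀ (by positivity)]; linarith
  have hite : ∀ (P : Prop) [Decidable P], 0 ≤ if P then p else 0 := fun _ _ => ite_nonneg hp le_rfl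
  have := hite (((2 * k + 1 : ℕ) : ℝ) ≤ lam / 2)
  have := hite (((2 * k + 1 : ℕ) : ℝ) ≤ lam - a * √L)
  have := hite (lam + a * √L ≤ ((2 * k + 1 : ℕ) : ℝ))
  have : (0 : ℝ) ≤ L ^ (5 / 2 : ℝ) := by positivity
  have : (0 : ℝ) ≤ 8 ^ (5 / 2 : ℝ) := by positivity
  have : 0 ≤ a * √L := by positivity
  rw [Set.mem_Icc, not_and_or, not_le, not_le] at hk
  rcases hk with hk | hk
  · by_cases hsmall : (k : ℝ) ≤ L / 8
    · rw [if_pos (show ((2 * k + 1 : ℕ) : ℝ) ≤ lam / 2 by rw [hcast]; linarith)]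
      nlinarith [hmono L (div_le_self hL.le (by linarith))]
    · rw [if_pos (show ((2 * k + 1 : ℕ) : ℝ) ≤ lam - a * √L by rw [hcast]; linarith)]
      nlinarith [hmono 8 (h8 (not_le.1 hsmall))]
  · rw [if_pos (show lam + a * √L ≤ ((2 * k + 1 : ℕ) : ℝ) by rw [hcast]; linarith)]
    nlinarith [hmono 8 (h8 (by linarith))]

lemma sum_poisson_weight_outside_window_le (hL : 0 < L) (ha : 0 ≤ a) (hlo : L / 2 + 2 ≤ lam)
    (hhi : lam ≤ L / 2 + a * √L + 1) (hcap : lam + a * √L ≤ L) (G : Finset ℕ)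
    (hG : ∀ k ∈ G, (k : ℝ) ∉ Set.Icc (1 / 4 * L - a * √L) (1 / 4 * L + a * √L)) :
    ∑ k ∈ G, (L / (k + 1)) ^ (5 / 2 : ℝ) * (exp (-lam) * lam ^ (2 * k + 1) / (2 * k + 1)!) ≤
      L ^ (5 / 2 : ℝ) * exp (-(lam / 16)) +
        8 ^ (5 / 2 : ℝ) * (exp (-(a ^ 2 / 4)) + exp (-(a ^ 2 / 4))) := by
  have hlam : 0 ≤ lam := by linarith
  have haQ : 0 ≤ a * √L := by positivity
  have hinj : Function.Injective fun k : ℕ => 2 * k + 1 := fun k l h => by simpa using h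
  have hd : 0 ≤ a / (2 * √L) := by positivity
  have hdaQ : a / (2 * √L) * (a * √L) = a ^ 2 / 2 := by
    have : √L ≠ 0 := (sqrt_pos.2 hL).ne'
    field_simp
  have hd2 : ∀ y ≤ L, 0 ≤ y → y * (a / (2 * √L)) ^ 2 ≤ a ^ 2 / 4 := fun y hy hy0 => by
    rw [div_pow, mul_pow, sq_sqrt hL.le]
    calc y * (a ^ 2 / (2 ^ 2 * L)) ≤ L * (a ^ 2 / (2 ^ 2 * L)) := by gcongr
      _ = a ^ 2 / 4 := by field_simp; norm_num
  have hsmall := sum_poisson_le_exp_of_le (G.filter fun k => ((2 * k + 1 : ℕ) : ℝ) ≤ lam / 2)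
    hinj.injOn hlam (d := 1 / 4) (by norm_num) (by linarith) fun k hk => (mem_filter.1 hk).2
  -- Tilting by `1 + a/(2√L)`, the deviation `a√L` gains `a²/2` in the exponent while the
  -- second-order term costs at most `a²/4`.
  have hbelow := sum_poisson_le_exp_of_le
    (G.filter fun k => ((2 * k + 1 : ℕ) : ℝ) ≤ lam - a * √L)
    hinj.injOn hlam hd (by linarith) fun k hk => (mem_filter.1 hk).2
  have habove := sum_poisson_le_exp_of_ge
    (G.filter fun k => lam + a * √L ≤ ((2 * k + 1 : ℕ) : ℝ))
    hinj.injOn hlam hd (by linarith) fun k hk => (mem_filter.1 hk).2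
  set p : ℕ → ℝ := fun k => exp (-lam) * lam ^ (2 * k + 1) / (2 * k + 1)!
  calc _ ≤ ∑ k ∈ G, (L ^ (5 / 2 : ℝ) * (if ((2 * k + 1 : ℕ) : ℝ) ≤ lam / 2 then p k else 0) +
        8 ^ (5 / 2 : ℝ) * ((if ((2 * k + 1 : ℕ) : ℝ) ≤ lam - a * √L then p k else 0) +
          (if lam + a * √L ≤ ((2 * k + 1 : ℕ) : ℝ) then p k else 0))) :=
        sum_le_sum fun k hk => rpow_mul_le_of_notMem_window hL ha hlo hhi (hG k hk) (by positivity)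
    _ ≤ _ := by
        simp only [sum_add_distrib, ← mul_sum, ← sum_filter]
        gcongr
        · exact hsmall.trans_eq (by congr 1; ring)
        · exact hbelow.trans (exp_le_exp.2 (by nlinarith [hd2 lam (by linarith) hlam]))
        · exact habove.trans (exp_le_exp.2 (by nlinarith [hd2 (lam + a * √L) hcap (by linarith)]))

end Window

lemma summand_le_pow_div_factorial {m n k : ℕ} (hk : k ≤ m) (hm : m ≤ n) (hn : 0 < n) {x : ℝ}
    (hx : 0 ≤ x) :
    tutteDelta k * ((m ! : ℝ) / (m - k)!) * poissonTail (x / √(256 / 27 * n)) (2 * k + 1) ≤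
      x ^ (2 * k + 1) / (2 * k + 1)! / (((k : ℝ) + 1) ^ (5 / 2 : ℝ) * √(256 / 27 * n)) := by
  have hr : 0 < √(256 / 27 * n) := by positivity
  have hpow : √(256 / 27 * n) ^ (2 * k + 1) = (256 / 27 * n) ^ k * √(256 / 27 * n) := by
    rw [pow_succ, pow_mul, sq_sqrt (by positivity)]
  calc _ ≤ (256 / 27 : ℝ) ^ k / ((k : ℝ) + 1) ^ (5 / 2 : ℝ) * (n : ℝ) ^ k *
        ((x / √(256 / 27 * n)) ^ (2 * k + 1) / (2 * k + 1)!) := by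
        gcongr ?_ * ?_ * ?_
        · exact poissonTail_nonneg (by positivity) _
        · exact tutteDelta_le k
        · exact (factorial_div_factorial_sub_le_pow hk).trans (by gcongr)
        · exact poissonTail_le (by positivity) _
    _ = _ := by
        rw [div_pow x, hpow]
        field_simp
        ring

lemma exp_half_log_add_five_halves_log_log (A : ℝ) {y : ℝ} (hy : 1 < y) :
    exp (1 / 2 * log y + 5 / 2 * log (log y) + A) = √y * log y ^ (5 / 2 : ℝ) * exp A := by
  rw [sqrt_eq_rpow, rpow_def_of_pos (by linarith), rpow_def_of_pos (log_pos hy), ← exp_add,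
    ← exp_add]
  ring_nf

lemma summand_le_mul_poisson_weight {n k : ℕ} (hk : k ≤ n - 3) (hn : 1 < n) {A lam : ℝ}
    (hlam0 : 0 ≤ lam) (hlam : exp lam = √n * log n ^ (5 / 2 : ℝ) * exp A) :
    tutteDelta k * ((n - 3)! / (n - 3 - k)!) * poissonTail (lam / √(256 / 27 * n)) (2 * k + 1) ≤
      exp A * ((log n / (k + 1)) ^ (5 / 2 : ℝ) *
        (exp (-lam) * lam ^ (2 * k + 1) / (2 * k + 1)!)) := by
  have hn1 : (1 : ℝ) < n := by exact_mod_cast hn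
  refine (summand_le_pow_div_factorial hk (Nat.sub_le n 3) (by omega) hlam0).trans ?_
  calc _ ≤ lam ^ (2 * k + 1) / (2 * k + 1)! / (((k : ℝ) + 1) ^ (5 / 2 : ℝ) * √n) := by
        gcongr
        linarith
    _ = _ := by
        have := log_pos hn1
        rw [div_rpow this.le (by positivity), exp_neg, hlam]
        field_simp

lemma sum_summand_outside_window_le {n : ℕ} (hn : 1 < n) {A a lam : ℝ} (ha : 0 ≤ a)
    (hlam : exp lam = √n * log n ^ (5 / 2 : ℝ) * exp A) (hlo : log n / 2 + 2 ≤ lam)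
    (hhi : lam ≤ log n / 2 + a * √(log n) + 1) (hcap : lam + a * √(log n) ≤ log n)
    (G : Finset ℕ) (hG : ∀ k ∈ G, k ≤ n - 3 ∧
      (k : ℝ) ∉ Set.Icc (1 / 4 * log n - a * √(log n)) (1 / 4 * log n + a * √(log n))) :
    ∑ k ∈ G, tutteDelta k * ((n - 3)! / (n - 3 - k)!) *
        poissonTail (lam / √(256 / 27 * n)) (2 * k + 1) ≤
      exp A * (log n ^ (5 / 2 : ℝ) * exp (-(log n / 32)) +
        8 ^ (5 / 2 : ℝ) * (exp (-(a ^ 2 / 4)) + exp (-(a ^ 2 / 4)))) := by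
  have hL : 0 < log n := log_pos (by exact_mod_cast hn)
  calc _ ≤ ∑ k ∈ G, exp A * ((log n / (k + 1)) ^ (5 / 2 : ℝ) *
          (exp (-lam) * lam ^ (2 * k + 1) / (2 * k + 1)!)) :=
        sum_le_sum fun k hk => summand_le_mul_poisson_weight (hG k hk).1 hn (by linarith) hlam
    _ ≤ exp A * (log n ^ (5 / 2 : ℝ) * exp (-(lam / 16)) +
          8 ^ (5 / 2 : ℝ) * (exp (-(a ^ 2 / 4)) + exp (-(a ^ 2 / 4)))) := by
        rw [← mul_sum]
        gcongr
        exact sum_poisson_weight_outside_window_le hL ha hlo hhi hcap G fun k hk => (hG k hk).2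
    _ ≤ _ := by
        gcongr exp A * (_ * ?_ + _)
        exact exp_le_exp.2 (by linarith)

lemma eventually_mul_log_add_le_sqrt (c A : ℝ) : ∀ᶠ x : ℝ in atTop, c * log x + A ≤ √x := by
  have hε : 0 < 1 / (2 * (|c| + 1)) := by positivity
  filter_upwards [(isLittleO_log_rpow_atTop one_half_pos).def hε,
    tendsto_sqrt_atTop.eventually_ge_atTop (2 * A), eventually_ge_atTop 0] with x hlog hA hx
  rw [norm_eq_abs, norm_eq_abs, ← sqrt_eq_rpow, abs_of_nonneg (sqrt_nonneg x)] at hlog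
  have : c * log x ≤ √x / 2 :=
    calc c * log x ≤ |c| * |log x| := by rw [← abs_mul]; exact le_abs_self _
      _ ≤ |c| * (1 / (2 * (|c| + 1)) * √x) := mul_le_mul_of_nonneg_left hlog (abs_nonneg c)
      _ = |c| / (|c| + 1) * (√x / 2) := by field_simp
      _ ≤ √x / 2 :=
        mul_le_of_le_one_left (by positivity) ((div_le_one (by positivity)).2 (by linarith))
  linarith

lemma eventually_window_conditions (A : ℝ) {a : ℕ → ℝ} (ha : Tendsto a atTop atTop)
    (ha' : Tendsto (fun n : ℕ => a n / √(log n)) atTop (nhds 0)) :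
    ∀ᶠ n : ℕ in atTop, 1 < n ∧ 0 ≤ a n ∧ 2 ≤ 5 / 2 * log (log n) + A ∧
      5 / 2 * log (log n) + A ≤ a n * √(log n) + 1 ∧
      a n * √(log n) + (5 / 2 * log (log n) + A) ≤ log n / 2 := by
  have hL : Tendsto (fun n : ℕ => log n) atTop atTop :=
    tendsto_log_atTop.comp tendsto_natCast_atTop_atTop
  have hc : Tendsto (fun n : ℕ => 5 / 2 * log (log n) + A) atTop atTop :=
    tendsto_atTop_add_const_right _ _ ((tendsto_log_atTop.comp hL).const_mul_atTop (by norm_num))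
  filter_upwards [eventually_gt_atTop 1, ha.eventually_ge_atTop 1, hc.eventually_ge_atTop 2,
    hL.eventually (eventually_mul_log_add_le_sqrt (5 / 2) A), hL.eventually_ge_atTop 16,
    ha'.eventually (eventually_le_nhds (show (0 : ℝ) < 1 / 4 by norm_num))]
    with n hn ha1 hc2 hcQ hL16 haQ
  have hQ : √(log n) * √(log n) = log n := mul_self_sqrt (by linarith)
  have hQ4 : 4 ≤ √(log n) := by
    rw [show (4 : ℝ) = √16 by rw [show (16 : ℝ) = 4 ^ 2 by norm_num, sqrt_sq (by norm_num)]]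
    exact sqrt_le_sqrt hL16
  rw [div_le_iff₀ (by linarith)] at haQ
  refine ⟨hn, by linarith, hc2, by nlinarith, by nlinarith⟩

lemma tendsto_window_bound (A : ℝ) {a : ℕ → ℝ} (ha : Tendsto a atTop atTop) :
    Tendsto (fun n : ℕ => exp A * (log n ^ (5 / 2 : ℝ) * exp (-(log n / 32)) +
      8 ^ (5 / 2 : ℝ) * (exp (-(a n ^ 2 / 4)) + exp (-(a n ^ 2 / 4))))) atTop (nhds 0) := by
  have hL : Tendsto (fun n : ℕ => log n) atTop atTop :=
    tendsto_log_atTop.comp tendsto_natCast_atTop_atTop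
  have hpoly : Tendsto (fun n : ℕ => log n ^ (5 / 2 : ℝ) * exp (-(log n / 32))) atTop (nhds 0) :=
    ((tendsto_rpow_mul_exp_neg_mul_atTop_nhds_zero _ _ (by norm_num : (0 : ℝ) < 1 / 32)).comp
      hL).congr fun n => by simp only [Function.comp_apply]; ring_nf
  have hgauss : Tendsto (fun n => exp (-(a n ^ 2 / 4))) atTop (nhds 0) :=
    tendsto_exp_atBot.comp <| tendsto_neg_atTop_atBot.comp <|
      ((tendsto_pow_atTop two_ne_zero).comp ha).atTop_div_const (by norm_num)
  simpa using (hpoly.add ((hgauss.add hgauss).const_mul _)).const_mul (exp A)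

open scoped Classical in
theorem first_moment_outside_window (A γ : ℝ) (hγ : γ = 256 / 27)
    (lam ω : ℕ → ℝ)
    (hlam : ∀ n : ℕ, lam n = (1 / 2) * Real.log n + (5 / 2) * Real.log (Real.log n) + A)
    (hω : ∀ n : ℕ, ω n = lam n / Real.sqrt (γ * n))
    (a : ℕ → ℝ) (ha : Tendsto a atTop atTop)
    (ha' : Tendsto (fun n : ℕ => a n / Real.sqrt (Real.log n)) atTop (nhds 0)) :
    Tendsto
      (fun n : ℕ => ∑ k ∈ (Finset.Icc 1 (n - 3)).filter
          (fun k : ℕ => (k : ℝ) ∉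
            Set.Icc ((1 / 4) * Real.log n - a n * Real.sqrt (Real.log n))
              ((1 / 4) * Real.log n + a n * Real.sqrt (Real.log n))),
        tutteDelta k * ((Nat.factorial (n - 3) : ℝ) / (Nat.factorial (n - 3 - k))) *
          poissonTail (ω n) (2 * k + 1))
      atTop (nhds 0) := by
  simp only [hω, hlam, hγ]
  refine squeeze_zero' ?_ ?_ (tendsto_window_bound A ha)
  · filter_upwards [eventually_window_conditions A ha ha'] with n hconds
    obtain ⟨hn, -, hc, -, -⟩ := hconds
    have : 0 ≤ log n := log_nonneg (by exact_mod_cast hn.le)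
    exact sum_nonneg fun k _ => mul_nonneg (mul_nonneg (tutteDelta_nonneg k) (by positivity))
      (poissonTail_nonneg (div_nonneg (by linarith) (sqrt_nonneg _)) _)
  · filter_upwards [eventually_window_conditions A ha ha'] with n hconds
    obtain ⟨hn, ha0, hc, hhi, hcap⟩ := hconds
    exact sum_summand_outside_window_le hn ha0
      (exp_half_log_add_five_halves_log_log A (by exact_mod_cast hn))
      (by linarith) (by linarith) (by linarith) _
      fun k hk => ⟨(mem_Icc.1 (mem_filter.1 hk).1).2, (mem_filter.1 hk).2⟩
end

section
/- Let γ = 256/27, Δ_k = 6(4k+1)!/(k!(3k+3)!), and μ_n = (3/2)·log n/√(γn). Then lim_{n→∞} Σ_{k=3}^{∞} Δ_k · n^{k-1} · k² · μ_n^{2k+1}/(2k+1)! = 0; in fact this sum is O(1/√(log n)). -/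
/-!
Tutte's number is `Δ_k = 6(4k+1) / ((3k+1)(3k+2)(3k+3)) · choose (4k) k`, and Stirling's formula
gives `choose (4k) k ≤ γ^k / √k`, so `Δ_k k² √k ≤ γ^k`. With `a = (3/2) log n`, so that
`n^{3/2} = e^a`, the `k`-th summand is then at most `(9/16) e^{-a} a^m / (m! √m)` with `m = 2k + 1`.
Up to the factor `9/16`, the sum of these bounds is at most `E[N^{-1/2}; N ≥ 1]` for a Poisson
variable `N` of mean `a`, and the AM-GM bound `2 / √m ≤ 1 / √a + √a / m` shows that this
expectation is at most `(3/2) / √a`.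
-/

open Filter Real

open Nat

theorem factorial_le_exp_one_mul_sqrt_mul_pow {n : ℕ} (hn : n ≠ 0) :
    (n ! : ℝ) ≤ exp 1 * √n * (n / exp 1) ^ n := by
  obtain ⟨m, rfl⟩ := Nat.exists_eq_add_one_of_ne_zero hn
  have h : Stirling.stirlingSeq (m + 1) ≤ Stirling.stirlingSeq 1 :=
    Stirling.stirlingSeq'_antitone (Nat.zero_le m)
  rw [Stirling.stirlingSeq_one, Stirling.stirlingSeq,
    div_le_div_iff₀ (by positivity) (by positivity), Real.sqrt_mul zero_le_two] at h
  refine le_of_mul_le_mul_right (h.trans_eq ?_) (by positivity : (0 : ℝ) < √2)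
  ring

theorem choose_four_mul_mul_sqrt_le (k : ℕ) :
    ((4 * k).choose k : ℝ) * √k ≤ (256 / 27) ^ k := by
  obtain rfl | hk0 := eq_or_ne k 0
  · simp
  set P : ℝ := ((k : ℝ) / exp 1) ^ k
  have h4k : ((4 * k)! : ℝ) ≤ exp 1 * (2 * √k) * (256 ^ k * P ^ 4) := by
    convert factorial_le_exp_one_mul_sqrt_mul_pow (n := 4 * k) (by omega) using 2 <;> push_cast
    · rw [Real.sqrt_mul (by norm_num), show (4 : ℝ) = 2 ^ 2 by norm_num,
        Real.sqrt_sq (by norm_num)]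
    · rw [mul_div_assoc, mul_pow, pow_mul, ← pow_mul (_ / _), mul_comm k 4, pow_mul]; norm_num
  have h1k : √(2 * π * k) * P ≤ (k ! : ℝ) := Stirling.le_factorial_stirling k
  have h3k : √(2 * π * (3 * k)) * (27 ^ k * P ^ 3) ≤ ((3 * k)! : ℝ) := by
    convert Stirling.le_factorial_stirling (3 * k) using 2
    · push_cast; rfl
    · push_cast
      rw [mul_div_assoc, mul_pow, pow_mul, ← pow_mul (_ / _), mul_comm k 3, pow_mul]; norm_num
  have hsqrt : 2 * π * k ≤ √(2 * π * k) * √(2 * π * (3 * k)) :=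
    calc 2 * π * k = √(2 * π * k) * √(2 * π * k) := (mul_self_sqrt (by positivity)).symm
      _ ≤ _ := by gcongr; linarith [(Nat.cast_nonneg k : (0 : ℝ) ≤ k)]
  have he : exp 1 ≤ π := by linarith [exp_one_lt_d9, pi_gt_three]
  rw [Nat.cast_choose ℝ (by omega : k ≤ 4 * k), show 4 * k - k = 3 * k by omega,
    div_mul_eq_mul_div, div_le_iff₀ (by positivity)]
  have hsk : √k * √k = (k : ℝ) := mul_self_sqrt (Nat.cast_nonneg k)
  calc ((4 * k)! : ℝ) * √k ≤ exp 1 * (2 * √k) * (256 ^ k * P ^ 4) * √k := by gcongr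
    _ = 256 ^ k * P ^ 4 * (2 * exp 1 * (√k * √k)) := by ring
    _ ≤ 256 ^ k * P ^ 4 * (√(2 * π * k) * √(2 * π * (3 * k))) := by
      rw [hsk]; exact mul_le_mul_of_nonneg_left (le_trans (by gcongr) hsqrt) (by positivity)
    _ = (256 / 27) ^ k * ((√(2 * π * k) * P) * (√(2 * π * (3 * k)) * (27 ^ k * P ^ 3))) := by
      rw [div_pow]; field_simp
    _ ≤ (256 / 27) ^ k * ((k ! : ℝ) * ((3 * k)! : ℝ)) := by gcongr

theorem tutteDelta_mul_sq_le_choose (k : ℕ) : tutteDelta k * k ^ 2 ≤ (4 * k).choose k := by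
  have hfac : ((4 * k)! : ℝ) = (4 * k).choose k * k ! * (3 * k)! := by
    rw [← Nat.choose_mul_factorial_mul_factorial (by omega : k ≤ 4 * k),
      show 4 * k - k = 3 * k by omega]
    push_cast; ring
  have hpoly : 6 * (4 * k + 1) * (k : ℝ) ^ 2 ≤ (3 * k + 3) * (3 * k + 2) * (3 * k + 1) := by
    nlinarith [(Nat.cast_nonneg k : (0 : ℝ) ≤ k)]
  rw [tutteDelta, div_mul_eq_mul_div, div_le_iff₀ (by positivity), Nat.factorial_succ,
    show 3 * k + 3 = 3 * k + 2 + 1 by rfl, Nat.factorial_succ, Nat.factorial_succ,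
    Nat.factorial_succ]
  push_cast
  rw [hfac]
  calc _ = (6 * (4 * k + 1) * (k : ℝ) ^ 2) * ((4 * k).choose k * k ! * (3 * k)!) := by ring
    _ ≤ ((3 * k + 3) * (3 * k + 2) * (3 * k + 1)) * ((4 * k).choose k * k ! * (3 * k)!) := by
      gcongr
    _ = _ := by ring

theorem tutteDelta_mul_sq_mul_sqrt_le (k : ℕ) : tutteDelta k * k ^ 2 * √k ≤ (256 / 27) ^ k :=
  (mul_le_mul_of_nonneg_right (tutteDelta_mul_sq_le_choose k) (sqrt_nonneg _)).trans
    (choose_four_mul_mul_sqrt_le k)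

theorem tutteDelta_summand_le {x a : ℝ} (hx : 0 < x) (ha : 0 ≤ a) {j : ℕ} (hj : j ≠ 0) :
    tutteDelta j * x ^ (j - 1) * (j : ℝ) ^ 2 * (a / √(256 / 27 * x)) ^ (2 * j + 1) /
        (2 * j + 1)!
      ≤ 9 / 16 / (x * √x) * (a ^ (2 * j + 1) / ((2 * j + 1)! * √(2 * j + 1 : ℕ))) := by
  set γ : ℝ := 256 / 27
  have hγ : √3 = 9 / 16 * √γ := by
    rw [show γ = (16 / 9) ^ 2 * 3 by norm_num, sqrt_mul (by positivity), sqrt_sq (by positivity)]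
    ring
  have hD : tutteDelta j * j ^ 2 * √(2 * j + 1 : ℕ) ≤ 9 / 16 * √γ * γ ^ j := by
    have h3 : √(2 * j + 1 : ℕ) ≤ √3 * √j := by
      rw [← sqrt_mul (by norm_num)]; gcongr; push_cast
      have : (1 : ℝ) ≤ j := by exact_mod_cast Nat.one_le_iff_ne_zero.mpr hj
      linarith
    have hD0 : 0 ≤ tutteDelta j * j ^ 2 := by unfold tutteDelta; positivity
    calc _ ≤ tutteDelta j * j ^ 2 * (√3 * √j) := by gcongr
      _ = √3 * (tutteDelta j * j ^ 2 * √j) := by ring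
      _ ≤ √3 * γ ^ j := by gcongr; exact tutteDelta_mul_sq_mul_sqrt_le j
      _ = _ := by rw [hγ]
  have hpow : √(γ * x) ^ (2 * j + 1) = γ ^ j * √γ * (x ^ (j - 1) * (x * √x)) := by
    obtain ⟨i, rfl⟩ := Nat.exists_eq_add_one_of_ne_zero hj
    rw [pow_succ, pow_mul, sq_sqrt (by positivity), sqrt_mul (by positivity)]
    simp only [Nat.add_sub_cancel]; ring
  have hsγ : 0 < √γ := by positivity
  have hγj : 0 < γ ^ j := by positivity
  rw [div_pow, hpow]
  calc _ = (tutteDelta j * j ^ 2 * √(2 * j + 1 : ℕ)) / (γ ^ j * √γ) / (x * √x) *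
        (a ^ (2 * j + 1) / ((2 * j + 1)! * √(2 * j + 1 : ℕ))) := by
        field_simp
    _ ≤ (9 / 16 * √γ * γ ^ j) / (γ ^ j * √γ) / (x * √x) *
        (a ^ (2 * j + 1) / ((2 * j + 1)! * √(2 * j + 1 : ℕ))) := by gcongr
    _ = _ := by field_simp

theorem tsum_pow_comp_div_factorial_le_exp {x : ℝ} (hx : 0 ≤ x) {f : ℕ → ℕ}
    (hf : Function.Injective f) : ∑' k, x ^ f k / (f k)! ≤ exp x := by
  have h := NormedSpace.expSeries_div_hasSum_exp x
  rw [← Real.exp_eq_exp_ℝ] at h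
  rw [← h.tsum_eq]
  exact tsum_comp_le_tsum_of_inj (Real.summable_pow_div_factorial x) (fun n => by positivity) hf

theorem two_div_sqrt_le {a m : ℝ} (ha : 0 < a) (hm : 0 < m) :
    2 / √m ≤ 1 / √a + √a / m := by
  have hu := sqrt_pos.mpr hm
  have hv := sqrt_pos.mpr ha
  rw [div_add_div _ _ hv.ne' hm.ne', div_le_div_iff₀ hu (by positivity)]
  nlinarith [mul_nonneg hu.le (sq_nonneg (√m - √a)), sq_sqrt hm.le, sq_sqrt ha.le]

theorem pow_div_factorial_div_sqrt_le {a : ℝ} (ha : 0 < a) {m : ℕ} (hm : m ≠ 0) :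
    a ^ m / (m ! * √m) ≤ (a ^ m / m ! + 2 * (a ^ (m + 1) / (m + 1)!)) / (2 * √a) := by
  have hm0 : (0 : ℝ) < m := by exact_mod_cast Nat.pos_of_ne_zero hm
  have hv := sqrt_pos.mpr ha
  have hsucc : a ^ (m + 1) / (m + 1)! = a ^ m / m ! * (a / (m + 1)) := by
    rw [pow_succ, Nat.factorial_succ]; push_cast; field_simp
  have hm1 : √a / m ≤ 2 * a / (m + 1) / √a := by
    rw [le_div_iff₀ hv, div_mul_eq_mul_div, mul_self_sqrt ha.le,
      div_le_div_iff₀ hm0 (by positivity)]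
    have : (1 : ℝ) ≤ m := by exact_mod_cast Nat.one_le_iff_ne_zero.mpr hm
    nlinarith
  calc a ^ m / (m ! * √m) = a ^ m / m ! * (2 / √m) / 2 := by field_simp
    _ ≤ a ^ m / m ! * (1 / √a + 2 * a / (m + 1) / √a) / 2 := by
      gcongr; exact (two_div_sqrt_le ha hm0).trans (by gcongr)
    _ = _ := by rw [hsucc]; field_simp

theorem summable_and_tsum_pow_comp_div_factorial_div_sqrt_le {a : ℝ} (ha : 0 < a)
    {f : ℕ → ℕ} (hf : Function.Injective f) (hf0 : ∀ k, f k ≠ 0) :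
    Summable (fun k => a ^ f k / ((f k)! * √(f k))) ∧
      ∑' k, a ^ f k / ((f k)! * √(f k)) ≤ 3 / 2 * exp a / √a := by
  have hf1 : Function.Injective (f · + 1) := (add_left_injective 1).comp hf
  have hu := (Real.summable_pow_div_factorial a).comp_injective hf
  have hv := (Real.summable_pow_div_factorial a).comp_injective hf1
  have hdom := fun k => pow_div_factorial_div_sqrt_le ha (hf0 k)
  have hmaj := (hu.add (hv.mul_left 2)).div_const (2 * √a)
  have hg := hmaj.of_nonneg_of_le (fun k => by positivity) hdom
  refine ⟨hg, (hg.tsum_le_tsum hdom hmaj).trans ?_⟩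
  simp only [Function.comp_def] at hu hv
  rw [tsum_div_const, hu.tsum_add (hv.mul_left 2), tsum_mul_left]
  calc _ ≤ (exp a + 2 * exp a) / (2 * √a) := by
        gcongr
        · exact tsum_pow_comp_div_factorial_le_exp ha.le hf
        · exact tsum_pow_comp_div_factorial_le_exp ha.le hf1
    _ = _ := by ring

noncomputable def improperFillingTerm (x : ℝ) (k : ℕ) : ℝ :=
  tutteDelta k * x ^ (k - 1) * (k : ℝ) ^ 2 * (3 / 2 * log x / √(256 / 27 * x)) ^ (2 * k + 1) /
    (2 * k + 1)!

theorem improperFillingTerm_nonneg {x : ℝ} (hx : 1 ≤ x) (k : ℕ) :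
    0 ≤ improperFillingTerm x k := by
  unfold improperFillingTerm tutteDelta
  positivity [log_nonneg hx]

theorem improperFillingTerm_le {x : ℝ} (hx : 1 < x) {k : ℕ} (hk : k ≠ 0) :
    improperFillingTerm x k ≤ 9 / 16 / exp (3 / 2 * log x) *
      ((3 / 2 * log x) ^ (2 * k + 1) / ((2 * k + 1)! * √(2 * k + 1 : ℕ))) := by
  have hx0 : 0 < x := by linarith
  have hexp : exp (3 / 2 * log x) = x * √x := by
    rw [show 3 / 2 * log x = log x + log x / 2 by ring, exp_add, exp_log hx0, exp_half,
      exp_log hx0]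
  rw [hexp]
  exact tutteDelta_summand_le hx0 (by positivity [log_pos hx]) hk

theorem tsum_improperFillingTerm_le {x : ℝ} (hx : 1 < x) :
    ∑' k, improperFillingTerm x (k + 3) ≤ 27 / 32 / √(3 / 2 * log x) := by
  set a := 3 / 2 * log x
  have ha : 0 < a := by positivity [log_pos hx]
  have hinj : Function.Injective (fun k => 2 * (k + 3) + 1) := fun i j h => by simp at h; omega
  obtain ⟨hg, hgle⟩ :=
    summable_and_tsum_pow_comp_div_factorial_div_sqrt_le ha hinj (fun _ => by omega)
  have hdom := fun k => improperFillingTerm_le hx (k := k + 3) (by omega)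
  have hsum := (hg.mul_left (9 / 16 / exp a)).of_nonneg_of_le
    (fun k => improperFillingTerm_nonneg hx.le _) hdom
  calc ∑' k, improperFillingTerm x (k + 3)
      ≤ 9 / 16 / exp a *
          ∑' k, a ^ (2 * (k + 3) + 1) / ((2 * (k + 3) + 1)! * √(2 * (k + 3) + 1 : ℕ)) := by
        rw [← tsum_mul_left]; exact hsum.tsum_le_tsum hdom (hg.mul_left _)
    _ ≤ 9 / 16 / exp a * (3 / 2 * exp a / √a) := by gcongr
    _ = 27 / 32 / √a := by field_simp; ring

theorem improper_fillings_first_moment (γ : ℝ) (hγ : γ = 256 / 27)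
    (μ : ℕ → ℝ) (hμ : ∀ n : ℕ, μ n = (3 / 2) * Real.log n / Real.sqrt (γ * n))
    (S : ℕ → ℝ)
    (hS : ∀ n : ℕ, S n = ∑' k : ℕ,
      tutteDelta (k + 3) * (n : ℝ) ^ (k + 3 - 1) * ((k + 3 : ℕ) : ℝ) ^ 2 *
        (μ n) ^ (2 * (k + 3) + 1) / (Nat.factorial (2 * (k + 3) + 1))) :
    Tendsto S atTop (nhds 0) ∧
      ∃ C : ℝ, ∀ᶠ n : ℕ in atTop, S n ≤ C / Real.sqrt (Real.log n) := by
  subst hγ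
  have hS' : ∀ n : ℕ, S n = ∑' k, improperFillingTerm n (k + 3) := fun n => by
    simp only [hS, hμ]; rfl
  have hbound : ∀ᶠ n : ℕ in atTop, 0 ≤ S n ∧ S n ≤ 1 / √(log n) := by
    filter_upwards [eventually_gt_atTop 1] with n hn
    have hx : (1 : ℝ) < n := by exact_mod_cast hn
    have hlog := log_pos hx
    refine ⟨hS' n ▸ tsum_nonneg fun k => improperFillingTerm_nonneg hx.le _,
      hS' n ▸ (tsum_improperFillingTerm_le hx).trans ?_⟩
    exact div_le_div₀ zero_le_one (by norm_num) (by positivity) (sqrt_le_sqrt (by linarith))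
  have hlim : Tendsto (fun n : ℕ => 1 / √(log n)) atTop (nhds 0) :=
    tendsto_const_nhds.div_atTop
      (tendsto_sqrt_atTop.comp (tendsto_log_atTop.comp tendsto_natCast_atTop_atTop))
  exact ⟨squeeze_zero' (hbound.mono fun _ h => h.1) (hbound.mono fun _ h => h.2) hlim,
    1, hbound.mono fun _ h => h.2⟩
end
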